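/- arXiv:1705.06534 — 4 statements merged into one kernel-verified Lean document; each statement's English description precedes it below -/
import Mathlib

section
/- If U is a unitary m×m matrix and ε is a skew-symmetric unitary matrix such that Uᵀ ε = ε U, and U = exp(iT) with T self-adjoint and spectrum of T contained in (-π, π], then Tᵀ ε = ε T. -/
/-!
Since `T` is Hermitian with eigenvalues in `(-π, π]`, where `x ↦ exp (i x)` is injective,
Lagrange interpolation gives a polynomial `p` with `p (exp (i λ)) = λ` at every eigenvalue `λ`,
so `T = p U` by the spectral theorem. The relation `Uᵀ ε = ε U` passes to polynomials in `U`,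
and transposition commutes with them, so `Tᵀ ε = p (Uᵀ) ε = ε p U = ε T`.
-/

open Complex Matrix Polynomial

theorem Complex.injOn_exp_ofReal_mul_I :
    Set.InjOn (fun x : ℝ => exp (x * I)) (Set.Ioc (-Real.pi) Real.pi) := by
  refine Set.LeftInvOn.injOn (f₁' := arg) fun θ hθ => ?_
  rwa [arg_exp_mul_I, toIocMod_eq_self, show -Real.pi + 2 * Real.pi = Real.pi by ring]

theorem SemiconjBy.aeval {R A : Type*} [CommSemiring R] [Semiring A] [Algebra R A] {a x y : A}
    (h : SemiconjBy a x y) (p : R[X]) : SemiconjBy a (aeval x p) (aeval y p) := by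
  induction p using Polynomial.induction_on' with
  | add p q hp hq => simpa only [map_add] using hp.add_right hq
  | monomial k r =>
    simpa only [aeval_monomial] using
      SemiconjBy.mul_right (Algebra.commute_algebraMap_right r a) (h.pow_right k)

namespace Matrix

variable {n : Type*} [Fintype n] [DecidableEq n]

theorem aeval_transpose {R α : Type*} [CommSemiring R] [CommSemiring α] [Algebra R α]
    (M : Matrix n n α) (p : R[X]) : aeval Mᵀ p = (aeval M p)ᵀ := by
  simp only [aeval_eq_sum_range, transpose_sum, transpose_smul, transpose_pow]

theorem aeval_diagonal {R α : Type*} [CommSemiring R] [CommSemiring α] [Algebra R α]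
    (d : n → α) (p : R[X]) : aeval (diagonal d) p = diagonal fun i => aeval (d i) p := by
  rw [← diagonalAlgHom_apply R, aeval_algHom_apply, diagonalAlgHom_apply, aeval_pi_apply]

theorem exp_conjStarAlgAut {𝕜 : Type*} [RCLike 𝕜] (U : unitary (Matrix n n 𝕜))
    (X : Matrix n n 𝕜) :
    NormedSpace.exp (Unitary.conjStarAlgAut 𝕜 _ U X) =
      Unitary.conjStarAlgAut 𝕜 _ U (NormedSpace.exp X) := by
  simp only [Unitary.conjStarAlgAut_apply, ← inv_eq_left_inv (Unitary.coe_star_mul_self U)]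
  exact exp_conj _ _ Unitary.isUnit_coe

namespace IsHermitian

variable {A : Matrix n n ℂ} (hA : A.IsHermitian)

theorem eigenvalues_mem {s : Set ℝ} (h : ∀ z ∈ spectrum ℂ A, ∃ x ∈ s, z = x) (i : n) :
    hA.eigenvalues i ∈ s := by
  obtain ⟨x, hx, hx_eq⟩ :=
    h _ ((spectrum.algebraMap_mem_iff ℂ).mpr (hA.eigenvalues_mem_spectrum_real i))
  rwa [show hA.eigenvalues i = x from ofReal_injective hx_eq]

theorem exp_I_smul_eq :
    NormedSpace.exp (I • A) = Unitary.conjStarAlgAut ℂ _ hA.eigenvectorUnitary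
      (diagonal fun i => Complex.exp (hA.eigenvalues i * I)) := by
  conv_lhs => rw [hA.spectral_theorem]
  rw [← map_smul, exp_conjStarAlgAut, ← diagonal_smul, exp_diagonal]
  congr 2
  ext i
  simp [← Complex.exp_eq_exp_ℂ, mul_comm]

theorem exists_aeval_exp_I_smul_eq {s : Set ℝ}
    (hs : Set.InjOn (fun x : ℝ => Complex.exp (x * I)) s) (hAs : ∀ i, hA.eigenvalues i ∈ s) :
    ∃ p : ℂ[X], aeval (NormedSpace.exp (I • A)) p = A := by
  classical
  let t := Finset.univ.image hA.eigenvalues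
  have ht : Set.InjOn (fun x : ℝ => Complex.exp (x * I)) t :=
    hs.mono (by simpa [t, Set.range_subset_iff] using hAs)
  refine ⟨Lagrange.interpolate t (fun x : ℝ => Complex.exp (x * I)) (fun x => (x : ℂ)), ?_⟩
  conv_rhs => rw [hA.spectral_theorem]
  rw [hA.exp_I_smul_eq, aeval_algHom_apply, aeval_diagonal]
  congr 2
  ext i
  rw [coe_aeval_eq_eval]
  exact Lagrange.eval_interpolate_at_node _ ht (Finset.mem_image_of_mem _ (Finset.mem_univ i))

end IsHermitian

end Matrix

theorem principal_log_inherits_symmetry_general {m : ℕ}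
    (ε T : Matrix (Fin m) (Fin m) ℂ)
    (hT : T.IsHermitian)
    (hspec : ∀ z ∈ spectrum ℂ T, ∃ x : ℝ, x ∈ Set.Ioc (-Real.pi) Real.pi ∧ z = (x : ℂ))
    (hUε : (NormedSpace.exp (Complex.I • T))ᵀ * ε = ε * NormedSpace.exp (Complex.I • T)) :
    Tᵀ * ε = ε * T := by
  obtain ⟨p, hp⟩ :=
    hT.exists_aeval_exp_I_smul_eq injOn_exp_ofReal_mul_I (hT.eigenvalues_mem hspec)
  have hsemiconj : SemiconjBy ε (NormedSpace.exp (I • T)) (NormedSpace.exp (I • T))ᵀ :=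
    hUε.symm
  rw [← hp, ← aeval_transpose]
  exact (hsemiconj.aeval p).symm

/-- If `U = exp(iT)` is unitary with `T` self-adjoint and `σ(T) ⊆ (-π, π]`, `ε` is a
skew-symmetric unitary matrix, and `Uᵀ ε = ε U`, then `Tᵀ ε = ε T`. -/
theorem principal_log_inherits_symmetry {m : ℕ}
    (ε T : Matrix (Fin m) (Fin m) ℂ)
    (hεu : ε ∈ Matrix.unitaryGroup (Fin m) ℂ) (hεskew : εᵀ = -ε)
    (hT : T.IsHermitian)
    (hspec : ∀ z ∈ spectrum ℂ T, ∃ x : ℝ, x ∈ Set.Ioc (-Real.pi) Real.pi ∧ z = (x : ℂ))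
    (hUunit : NormedSpace.exp (Complex.I • T) ∈ Matrix.unitaryGroup (Fin m) ℂ)
    (hUε : (NormedSpace.exp (Complex.I • T))ᵀ * ε = ε * NormedSpace.exp (Complex.I • T)) :
    Tᵀ * ε = ε * T :=
  principal_log_inherits_symmetry_general ε T hT hspec hUε
end

section
/- Every skew-symmetric unitary matrix ε ∈ U(2n) can be written as ε = W J Wᵀ for some unitary W, where J is the standard symplectic form (block diagonal with n copies of [[0,1],[-1,0]]). -/
open Matrix

/-!
Hua's normal form is a quaternionic Gram–Schmidt process. For unitary skew-symmetric `ε`, the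
antilinear map `j x = ε x̄` satisfies `j (j x) = -x` and `⟪j x, j y⟫ = ⟪y, x⟫`, hence
`⟪x, j y⟫ = -⟪y, j x⟫` and `⟪x, j x⟫ = 0`. So if a unit vector `z` is orthogonal to
`f₁, j f₁, …, fₖ, j fₖ`, then so is `j z`, and `z` extends the family; by dimension count this
yields an orthonormal basis `j f₁, f₁, …, j fₙ, fₙ`. The unitary `W` with these columns satisfies
`Wᴴ ε W̄ = J`, that is, `ε = W J Wᵀ`.
-/

/-- The standard symplectic form on `ℂ^{2n}`: block-diagonal with `n` copies of
`[[0, 1], [-1, 0]]`. -/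
def stdSymplecticJ (n : ℕ) : Matrix (Fin (2*n)) (Fin (2*n)) ℂ := fun i j =>
  if j.val = i.val + 1 ∧ i.val % 2 = 0 then 1
  else if i.val = j.val + 1 ∧ j.val % 2 = 0 then -1
  else 0

open scoped InnerProductSpace Kronecker

section QuaternionicStructure

variable {𝕜 E : Type*} [RCLike 𝕜] [NormedAddCommGroup E] [InnerProductSpace 𝕜 E]

theorem exists_norm_eq_one_forall_inner_eq_zero [FiniteDimensional 𝕜 E] {ι : Type*} [Fintype ι]
    (g : ι → E) (h : Fintype.card ι < Module.finrank 𝕜 E) :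
    ∃ z : E, ‖z‖ = 1 ∧ ∀ i, ⟪z, g i⟫_𝕜 = 0 := by
  let φ : E →ₗ[𝕜] ι → 𝕜 := LinearMap.pi fun i => innerₛₗ 𝕜 (g i)
  have hker : LinearMap.ker φ ≠ ⊥ :=
    LinearMap.ker_ne_bot_of_finrank_lt (by rwa [Module.finrank_fintype_fun_eq_card])
  obtain ⟨x, hx, hx0⟩ := (Submodule.ne_bot_iff _).1 hker
  refine ⟨((‖x‖ : 𝕜))⁻¹ • x, norm_smul_inv_norm hx0, fun i => ?_⟩
  have hxi : ⟪g i, x⟫_𝕜 = 0 := congrFun hx i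
  rw [inner_smul_left, inner_eq_zero_symm.1 hxi, mul_zero]

variable {j : E → E}

theorem inner_apply_eq_neg_inner_apply (hjj : ∀ x, j (j x) = -x)
    (hinner : ∀ x y, ⟪j x, j y⟫_𝕜 = ⟪y, x⟫_𝕜) (x y : E) : ⟪x, j y⟫_𝕜 = -⟪y, j x⟫_𝕜 := by
  rw [← hinner, hjj, inner_neg_left]

variable (𝕜 j) in
/-- Orthonormality over the quaternions `𝕜 ⊕ 𝕜 j`: for a quaternionic structure `j`, this says
that `f` and `j ∘ f` together form an orthonormal family. -/
def QuaternionicOrthonormal {ι : Type*} (f : ι → E) : Prop :=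
  Orthonormal 𝕜 f ∧ ∀ k l, ⟪f k, j (f l)⟫_𝕜 = 0

theorem QuaternionicOrthonormal.inner_apply_left {ι : Type*} {f : ι → E}
    (hf : QuaternionicOrthonormal 𝕜 j f) (k l : ι) : ⟪j (f k), f l⟫_𝕜 = 0 :=
  inner_eq_zero_symm.1 (hf.2 l k)

theorem QuaternionicOrthonormal.vecCons (hjj : ∀ x, j (j x) = -x)
    (hinner : ∀ x y, ⟪j x, j y⟫_𝕜 = ⟪y, x⟫_𝕜) {m : ℕ} {f : Fin m → E}
    (hf : QuaternionicOrthonormal 𝕜 j f) {z : E} (hz : ‖z‖ = 1)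
    (hzf : ∀ k, ⟪z, f k⟫_𝕜 = 0) (hzjf : ∀ k, ⟪z, j (f k)⟫_𝕜 = 0) :
    QuaternionicOrthonormal 𝕜 j (vecCons z f) := by
  have hneg := inner_apply_eq_neg_inner_apply hjj hinner
  have hzjz : ⟪z, j z⟫_𝕜 = 0 := by
    linear_combination (1 / 2 : 𝕜) * hneg z z
  refine ⟨orthonormal_vecCons_iff.2 ⟨hz, hzf, hf.1⟩, ?_⟩
  simp only [Fin.forall_fin_succ, cons_val_zero, cons_val_succ]
  exact ⟨⟨hzjz, hzjf⟩, fun k => ⟨by rw [hneg, hzjf, neg_zero], hf.2 k⟩⟩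

theorem exists_quaternionicOrthonormal [FiniteDimensional 𝕜 E] (hjj : ∀ x, j (j x) = -x)
    (hinner : ∀ x y, ⟪j x, j y⟫_𝕜 = ⟪y, x⟫_𝕜) :
    ∀ m, 2 * m ≤ Module.finrank 𝕜 E → ∃ f : Fin m → E, QuaternionicOrthonormal 𝕜 j f
  | 0, _ => ⟨Fin.elim0, by simp [QuaternionicOrthonormal]⟩
  | m + 1, hm => by
    obtain ⟨f, hf⟩ := exists_quaternionicOrthonormal hjj hinner m (by omega)
    obtain ⟨z, hz, hzg⟩ := exists_norm_eq_one_forall_inner_eq_zero (𝕜 := 𝕜) (Sum.elim f (j ∘ f))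
      (by rw [Fintype.card_sum, Fintype.card_fin]; omega)
    exact ⟨_, hf.vecCons hjj hinner hz (fun k => hzg (.inl k)) (fun k => hzg (.inr k))⟩

variable (j) in
def symplecticFamily {ι : Type*} (f : ι → E) (p : ι × Fin 2) : E :=
  ![j (f p.1), f p.1] p.2

theorem QuaternionicOrthonormal.orthonormal_symplecticFamily
    (hinner : ∀ x y, ⟪j x, j y⟫_𝕜 = ⟪y, x⟫_𝕜) {ι : Type*} {f : ι → E}
    (hf : QuaternionicOrthonormal 𝕜 j f) : Orthonormal 𝕜 (symplecticFamily j f) := by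
  classical
  have hf1 := orthonormal_iff_ite.1 hf.1
  rw [orthonormal_iff_ite]
  rintro ⟨k, r⟩ ⟨l, s⟩
  fin_cases r <;> fin_cases s <;>
    simp [symplecticFamily, hinner, hf1, hf.2, hf.inner_apply_left, eq_comm]

theorem QuaternionicOrthonormal.inner_symplecticFamily (hjj : ∀ x, j (j x) = -x)
    (hinner : ∀ x y, ⟪j x, j y⟫_𝕜 = ⟪y, x⟫_𝕜) {ι : Type*} [DecidableEq ι] {f : ι → E}
    (hf : QuaternionicOrthonormal 𝕜 j f) (p q : ι × Fin 2) :
    ⟪symplecticFamily j f p, j (symplecticFamily j f q)⟫_𝕜 =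
      ((1 : Matrix ι ι 𝕜) ⊗ₖ !![0, 1; -1, 0]) p q := by
  have hf1 := orthonormal_iff_ite.1 hf.1
  obtain ⟨k, r⟩ := p
  obtain ⟨l, s⟩ := q
  fin_cases r <;> fin_cases s <;>
    simp [symplecticFamily, hinner, hjj, hf1, hf.2, hf.inner_apply_left, eq_comm, one_apply]

end QuaternionicStructure

section UnitaryMatrix

variable {ι κ : Type*} [Fintype ι]

def antiMulVec (ε : Matrix ι ι ℂ) (x : EuclideanSpace ℂ ι) : EuclideanSpace ℂ ι :=
  WithLp.toLp 2 (ε *ᵥ star (WithLp.ofLp x))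

theorem antiMulVec_antiMulVec [DecidableEq ι] {ε : Matrix ι ι ℂ} (hε : ε ∈ unitaryGroup ι ℂ)
    (hskew : εᵀ = -ε) (x : EuclideanSpace ℂ ι) : antiMulVec ε (antiMulVec ε x) = -x := by
  have hconj : εᴴᵀ = -εᴴ := by
    rw [conjTranspose_transpose, ← transpose_conjTranspose, hskew, conjTranspose_neg]
  have h1 : ε * εᴴ = 1 := mem_unitaryGroup_iff.1 hε
  change WithLp.toLp 2 (ε *ᵥ star (ε *ᵥ star x.ofLp)) = -x
  rw [star_mulVec, star_star, ← mulVec_transpose, hconj, mulVec_mulVec, Matrix.mul_neg, h1,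
    neg_mulVec, one_mulVec]
  rfl

theorem inner_antiMulVec_antiMulVec [DecidableEq ι] {ε : Matrix ι ι ℂ}
    (hε : ε ∈ unitaryGroup ι ℂ) (x y : EuclideanSpace ℂ ι) :
    ⟪antiMulVec ε x, antiMulVec ε y⟫_ℂ = ⟪y, x⟫_ℂ := by
  have h1 : εᴴ * ε = 1 := mem_unitaryGroup_iff'.1 hε
  simp only [antiMulVec, EuclideanSpace.inner_eq_star_dotProduct, star_mulVec, star_star]
  rw [dotProduct_comm, ← dotProduct_mulVec, mulVec_mulVec, h1, one_mulVec]

theorem conjTranspose_of_mul_of_apply (b : κ → EuclideanSpace ℂ ι) (p q : κ) :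
    ((of fun i k => b k i)ᴴ * of fun i k => b k i) p q = ⟪b p, b q⟫_ℂ := by
  simp [mul_apply, EuclideanSpace.inner_eq_star_dotProduct, dotProduct, mul_comm]

theorem conjTranspose_of_mul_mul_map_star_apply [Fintype κ] (ε : Matrix ι ι ℂ)
    (b : κ → EuclideanSpace ℂ ι) (p q : κ) :
    ((of fun i k => b k i)ᴴ * ε * (of fun i k => b k i).map star) p q =
      ⟪b p, antiMulVec ε (b q)⟫_ℂ := by
  rw [Matrix.mul_assoc]
  simp [mul_apply, EuclideanSpace.inner_eq_star_dotProduct, dotProduct, antiMulVec, mulVec,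
    mul_comm]

variable [DecidableEq ι]

theorem mem_unitaryGroup_of_orthonormal {b : ι → EuclideanSpace ℂ ι} (hb : Orthonormal ℂ b) :
    (of fun i k => b k i) ∈ unitaryGroup ι ℂ := by
  rw [mem_unitaryGroup_iff', star_eq_conjTranspose]
  ext p q
  rw [conjTranspose_of_mul_of_apply, orthonormal_iff_ite.1 hb, one_apply]

theorem eq_mul_mul_transpose_of_conjTranspose_mul_mul_map_star_eq {ε W J : Matrix ι ι ℂ}
    (hW : W ∈ unitaryGroup ι ℂ) (h : Wᴴ * ε * W.map star = J) : ε = W * J * Wᵀ := by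
  have h1 : W * Wᴴ = 1 := mem_unitaryGroup_iff.1 hW
  have h2 : W.map star * Wᵀ = 1 := by
    rw [← conjTranspose_transpose, ← transpose_mul, h1, transpose_one]
  calc ε = W * Wᴴ * ε * (W.map star * Wᵀ) := by rw [h1, h2, one_mul, mul_one]
    _ = W * J * Wᵀ := by rw [← h]; simp only [Matrix.mul_assoc]

end UnitaryMatrix

def finTwoMulEquiv (n : ℕ) : Fin (2 * n) ≃ Fin n × Fin 2 :=
  (finCongr (Nat.mul_comm 2 n)).trans finProdFinEquiv.symm

theorem finTwoMulEquiv_symm_apply_val {n : ℕ} (p : Fin n × Fin 2) :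
    ((finTwoMulEquiv n).symm p : ℕ) = 2 * p.1 + p.2 := by
  simp [finTwoMulEquiv, add_comm]

theorem stdSymplecticJ_eq_submatrix_kronecker (n : ℕ) :
    stdSymplecticJ n = ((1 : Matrix (Fin n) (Fin n) ℂ) ⊗ₖ !![0, 1; -1, 0]).submatrix
      (finTwoMulEquiv n) (finTwoMulEquiv n) := by
  ext i k
  obtain ⟨⟨a, r⟩, rfl⟩ := (finTwoMulEquiv n).symm.surjective i
  obtain ⟨⟨c, s⟩, rfl⟩ := (finTwoMulEquiv n).symm.surjective k
  simp only [stdSymplecticJ, finTwoMulEquiv_symm_apply_val, submatrix_apply,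
    Equiv.apply_symm_apply, kronecker_apply, one_apply, Fin.ext_iff]
  fin_cases r <;> fin_cases s <;> simp [Nat.two_mul_ne_two_mul_add_one,
    Nat.two_mul_ne_two_mul_add_one.symm, eq_comm, apply_ite]

/-- Hua's normal form: every skew-symmetric unitary matrix `ε ∈ U(2n)` can be written as
`ε = W J Wᵀ` for some unitary `W`, with `J` the standard symplectic form. -/
theorem skew_symmetric_unitary_normal_form (n : ℕ)
    (ε : Matrix (Fin (2*n)) (Fin (2*n)) ℂ)
    (hε : ε ∈ Matrix.unitaryGroup (Fin (2*n)) ℂ) (hskew : εᵀ = -ε) :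
    ∃ W ∈ Matrix.unitaryGroup (Fin (2*n)) ℂ, ε = W * stdSymplecticJ n * Wᵀ := by
  have hjj := antiMulVec_antiMulVec hε hskew
  have hinner := inner_antiMulVec_antiMulVec hε
  obtain ⟨f, hf⟩ := exists_quaternionicOrthonormal hjj hinner n (by simp)
  let b := symplecticFamily (antiMulVec ε) f ∘ finTwoMulEquiv n
  have hW : (of fun i k => b k i) ∈ unitaryGroup (Fin (2 * n)) ℂ :=
    mem_unitaryGroup_of_orthonormal
      ((hf.orthonormal_symplecticFamily hinner).comp _ (Equiv.injective _))
  refine ⟨_, hW, eq_mul_mul_transpose_of_conjTranspose_mul_mul_map_star_eq hW ?_⟩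
  ext p q
  rw [conjTranspose_of_mul_mul_map_star_apply, stdSymplecticJ_eq_submatrix_kronecker]
  exact hf.inner_symplecticFamily hjj hinner _ _
end

section
/- If Θ is an antiunitary operator on a finite-dimensional complex Hilbert space with Θ² = -1, and P is an orthogonal projection commuting with Θ in the sense ΘPΘ⁻¹ = P, then the rank of P is even. -/
/-! Multiplication by `i` and `Θ` are real-linear, square to `-1` and anticommute (`Θ` is
antilinear), so together with `k = iΘ` they make `Ran P` a module over the quaternions `ℍ`.
Counting real dimensions, `2 · dim_ℂ (Ran P) = dim_ℝ (Ran P) = 4 · dim_ℍ (Ran P)`. -/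

open Module Quaternion

namespace LinearMap

variable {V W : Type*} [AddCommGroup V] [Module ℂ V] [AddCommGroup W] [Module ℂ W]

def toRealLinearMap (J : V →ₗ⋆[ℂ] W) : V →ₗ[ℝ] W where
  toFun := J
  map_add' := J.map_add
  map_smul' r x := by simp [← Complex.coe_smul]

@[simp]
theorem toRealLinearMap_apply (J : V →ₗ⋆[ℂ] W) (x : V) : J.toRealLinearMap x = J x := rfl

end LinearMap

namespace QuaternionAlgebra.Basis

variable {V : Type*} [AddCommGroup V] [Module ℂ V]

def ofConjLinear (J : V →ₗ⋆[ℂ] V) (hJ : ∀ x, J (J x) = -x) :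
    Basis (Module.End ℝ V) (-1 : ℝ) 0 (-1) where
  i := (Complex.I • LinearMap.id : V →ₗ[ℂ] V).restrictScalars ℝ
  j := J.toRealLinearMap
  k := (Complex.I • LinearMap.id : V →ₗ[ℂ] V).restrictScalars ℝ * J.toRealLinearMap
  i_mul_i := by ext x; simp [smul_smul]
  j_mul_j := by ext x; simp [hJ]
  i_mul_j := rfl
  j_mul_i := by ext x; simp

end QuaternionAlgebra.Basis

theorem even_finrank_of_conjLinear_sq_eq_neg_one {V : Type*} [AddCommGroup V] [Module ℂ V]
    (J : V →ₗ⋆[ℂ] V) (hJ : ∀ x, J (J x) = -x) : Even (finrank ℂ V) := by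
  let f : ℍ[ℝ] →ₐ[ℝ] Module.End ℝ V := QuaternionAlgebra.lift (.ofConjLinear J hJ)
  let _ : Module ℍ[ℝ] V := Module.compHom V f.toRingHom
  have : IsScalarTower ℝ ℍ[ℝ] V := ⟨fun r q x => by
    change f (r • q) x = r • f q x
    rw [map_smul]
    rfl⟩
  have h4 : finrank ℝ V = 4 * finrank ℍ[ℝ] V := by
    rw [← finrank_mul_finrank ℝ ℍ[ℝ] V, Quaternion.finrank_eq_four]
  have h2 : finrank ℝ V = 2 * finrank ℂ V := finrank_real_of_complex V
  exact ⟨finrank ℍ[ℝ] V, by omega⟩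

theorem even_rank_of_timeReversal_invariant_projection_general
    {H : Type*} [NormedAddCommGroup H] [InnerProductSpace ℂ H]
    (Θ : H →ₗ⋆[ℂ] H)
    (hΘ2 : ∀ x, Θ (Θ x) = -x)
    (P : H →ₗ[ℂ] H)
    (hcomm : ∀ x, Θ (P x) = P (Θ x)) :
    Even (Module.finrank ℂ (LinearMap.range P)) := by
  have hinv : ∀ v ∈ LinearMap.range P, Θ v ∈ LinearMap.range P := by
    rintro _ ⟨y, rfl⟩
    exact ⟨Θ y, (hcomm y).symm⟩
  exact even_finrank_of_conjLinear_sq_eq_neg_one (Θ.restrict hinv) fun v => Subtype.ext (hΘ2 v)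

/-- Kramers degeneracy: if `Θ` is an antiunitary operator with `Θ² = -1` on a
finite-dimensional complex Hilbert space, and `P` is an orthogonal projection commuting
with `Θ`, then the rank of `P` is even. -/
theorem even_rank_of_timeReversal_invariant_projection
    {H : Type*} [NormedAddCommGroup H] [InnerProductSpace ℂ H] [FiniteDimensional ℂ H]
    (Θ : H →ₗ⋆[ℂ] H)
    (hΘinner : ∀ x y : H, (inner ℂ (Θ x) (Θ y) : ℂ) = inner ℂ y x)
    (hΘ2 : ∀ x, Θ (Θ x) = -x)
    (P : H →ₗ[ℂ] H)
    (hPidem : P ∘ₗ P = P)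
    (hPsa : ∀ x y : H, (inner ℂ (P x) y : ℂ) = inner ℂ x (P y))
    (hcomm : ∀ x, Θ (P x) = P (Θ x)) :
    Even (Module.finrank ℂ (LinearMap.range P)) :=
  even_rank_of_timeReversal_invariant_projection_general Θ hΘ2 P hcomm
end

section
/- If two orthogonal projections P and Q on a Hilbert space satisfy ‖P - Q‖ < 1, then the Kato–Nagy operator W = (1 - (P-Q)²)^{-1/2} (QP + (1-Q)(1-P)) is unitary and intertwines P and Q: W P W⁻¹ = Q. -/
/-!
`U = QP + (1 - Q)(1 - P)` already intertwines, `UP = QP = QU`, and it is normal with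
`U*U = UU* = 1 - (P - Q)²`. This operator is invertible because `‖P - Q‖ < 1`, and its positive
square root `R` commutes with everything that commutes with it: `Q` and `U`. Dividing `U` by `R`
therefore keeps the intertwining relation and makes `U` unitary.
-/

open scoped Ring

section IdempotentPair

variable {A : Type*} [Ring A] {p q : A}

theorem IsIdempotentElem.commute_sub_mul_self (hp : IsIdempotentElem p) (hq : IsIdempotentElem q) :
    Commute q ((p - q) * (p - q)) := by
  simp only [Commute, SemiconjBy, mul_sub, sub_mul, mul_assoc, hp.eq, hq.eq, hq.mul_self_mul]
  abel

theorem IsIdempotentElem.semiconjBy_mul_add_one_sub_mul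
    (hp : IsIdempotentElem p) (hq : IsIdempotentElem q) :
    SemiconjBy (q * p + (1 - q) * (1 - p)) p q := by
  simp only [SemiconjBy, mul_sub, sub_mul, mul_add, add_mul, mul_one, one_mul, mul_assoc, hp.eq,
    hq.eq, hq.mul_self_mul]
  abel

theorem IsIdempotentElem.mul_add_one_sub_mul_swap
    (hp : IsIdempotentElem p) (hq : IsIdempotentElem q) :
    (p * q + (1 - p) * (1 - q)) * (q * p + (1 - q) * (1 - p)) = 1 - (p - q) * (p - q) := by
  simp only [mul_sub, sub_mul, mul_add, add_mul, mul_one, one_mul, mul_assoc, hp.eq, hq.eq,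
    hq.mul_self_mul]
  abel

end IdempotentPair

theorem Commute.ringInverse_left {M₀ : Type*} [MonoidWithZero M₀] {a b : M₀}
    (h : Commute a b) : Commute a⁻¹ʳ b := by
  by_cases ha : IsUnit a
  · obtain ⟨u, rfl⟩ := ha
    rw [Ring.inverse_unit]
    exact h.units_inv_left
  · rw [Ring.inverse_non_unit a ha]
    exact Commute.zero_left b

theorem ringInverse_mul_mem_unitary {A : Type*} [Semiring A] [StarRing A] {r u : A}
    (hr : IsUnit r) (hr_sa : IsSelfAdjoint r) (hru : Commute r u)
    (h_star_mul : star u * u = r * r) (h_mul_star : u * star u = r * r) :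
    r⁻¹ʳ * u ∈ unitary A := by
  have hu : Commute r⁻¹ʳ u := hru.ringInverse_left
  rw [Unitary.mem_iff, star_mul, hr_sa.ringInverse.star_eq]
  constructor
  · calc star u * r⁻¹ʳ * (r⁻¹ʳ * u) = star u * u * (r⁻¹ʳ * r⁻¹ʳ) := by
          rw [mul_assoc, ← mul_assoc r⁻¹ʳ, (hu.mul_left hu).eq, mul_assoc]
      _ = 1 := by
          rw [h_star_mul, mul_assoc, Ring.mul_inverse_cancel_left r _ hr,
            Ring.mul_inverse_cancel r hr]
  · calc r⁻¹ʳ * u * (star u * r⁻¹ʳ) = r⁻¹ʳ * (r * (r * r⁻¹ʳ)) := by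
          rw [mul_assoc, ← mul_assoc u, h_mul_star, mul_assoc]
      _ = 1 := by
          rw [Ring.mul_inverse_cancel r hr, mul_one, Ring.inverse_mul_cancel r hr]

theorem Commute.of_mul_self_left {A : Type*} [CStarAlgebra A] [PartialOrder A]
    [StarOrderedRing A] {r b : A} (hr : 0 ≤ r) (h : Commute (r * r) b) : Commute r b := by
  have h_sqrt := h.cfc_nnreal NNReal.sqrt
  rwa [← CFC.sqrt_eq_cfc, CFC.sqrt_mul_self r hr] at h_sqrt

/-- Kato–Nagy: if two orthogonal projections `P`, `Q` on a Hilbert space satisfy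
`‖P - Q‖ < 1`, then `W = (1 - (P-Q)²)^{-1/2} (QP + (1-Q)(1-P))` is unitary and
intertwines `P` and `Q`: `W P = Q W` (i.e. `W P W⁻¹ = Q`). Here `R` denotes the
(unique) positive square root of `1 - (P-Q)²`. -/
theorem katoNagy_unitary_intertwines
    {H : Type*} [NormedAddCommGroup H] [InnerProductSpace ℂ H] [CompleteSpace H]
    (P Q R : H →L[ℂ] H)
    (hPsa : IsSelfAdjoint P) (hP2 : P * P = P)
    (hQsa : IsSelfAdjoint Q) (hQ2 : Q * Q = Q)
    (hPQ : ‖P - Q‖ < 1)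
    (hRpos : R.IsPositive)
    (hR2 : R * R = 1 - (P - Q) * (P - Q)) :
    Ring.inverse R * (Q * P + (1 - Q) * (1 - P)) ∈ unitary (H →L[ℂ] H) ∧
    (Ring.inverse R * (Q * P + (1 - Q) * (1 - P))) * P =
      Q * (Ring.inverse R * (Q * P + (1 - Q) * (1 - P))) := by
  have hp : IsIdempotentElem P := hP2
  have hq : IsIdempotentElem Q := hQ2
  set U := Q * P + (1 - Q) * (1 - P)
  have hU_star : star U = P * Q + (1 - P) * (1 - Q) := by
    simp [U, star_mul, hPsa.star_eq, hQsa.star_eq]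
  have h_star_mul : star U * U = R * R := by rw [hU_star, hp.mul_add_one_sub_mul_swap hq, hR2]
  have h_mul_star : U * star U = R * R := by
    rw [hU_star, hq.mul_add_one_sub_mul_swap hp, hR2, ← neg_sub P Q, neg_mul_neg]
  have hR : 0 ≤ R := (R.nonneg_iff_isPositive).mpr hRpos
  have hR_unit : IsUnit R := by
    refine (isUnit_pow_iff two_ne_zero).mp (pow_two R ▸ hR2 ▸ isUnit_one_sub_of_norm_lt_one ?_)
    exact (norm_mul_le _ _).trans_lt <|
      mul_lt_one_of_nonneg_of_lt_one_left (norm_nonneg _) hPQ hPQ.le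
  have hRQ : Commute R Q := .of_mul_self_left hR <|
    hR2 ▸ (Commute.one_left Q).sub_left (hp.commute_sub_mul_self hq).symm
  have hRU : Commute R U := .of_mul_self_left hR <| by
    -- `R²U = UU*U = UR²`
    rw [Commute, SemiconjBy]
    nth_rw 1 [← h_mul_star]
    rw [← h_star_mul, mul_assoc]
  refine ⟨ringInverse_mul_mem_unitary hR_unit hRpos.isSelfAdjoint hRU h_star_mul h_mul_star, ?_⟩
  rw [mul_assoc, (hp.semiconjBy_mul_add_one_sub_mul hq).eq, ← mul_assoc, hRQ.ringInverse_left.eq,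
    mul_assoc]
end
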